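/- arXiv:2306.10908 — 5 statements merged into one kernel-verified Lean document; each statement's English description precedes it below -/
import Mathlib

section
/- Let M be a positive integer and r a real number with 1 - 1/M ≤ r < 1. For any nonnegative reals λ_1, ..., λ_M with λ_1 + ... + λ_M = 1, there exists a sequence x_1, x_2, ... taking values in {1,...,M} such that for each j, the sum over k of (1-r)·r^{k-1} over those indices k with x_k = j equals λ_j. -/
/-!
Greedy construction: keep a residual vector `μ_k`, starting from `μ_0 = λ`, and at step `k`
give the weight `a_k` to a coordinate where `μ_k` is largest. The largest coordinate is at least
the average `(∑ μ_k) / M`, and `∑ μ_k` is the tail `∑_{i ≥ k} a_i`; so as long as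
`M a_k` never exceeds that tail, the residuals stay nonnegative, hence are squeezed to `0` by the
tails. For `a_k = (1 - r) r^k` the tail is `r^k`, and the condition is `M (1 - r) ≤ 1`.
-/

open Finset Filter Topology

namespace GreedyPartition

variable {ι : Type*}

section Argmax

variable [Finite ι] [Nonempty ι]

noncomputable def argmax (μ : ι → ℝ) : ι :=
  Classical.choose (Finite.exists_max μ)

lemma le_argmax (μ : ι → ℝ) (j : ι) : μ j ≤ μ (argmax μ) :=
  Classical.choose_spec (Finite.exists_max μ) j

end Argmax

variable [Fintype ι] [Nonempty ι] [DecidableEq ι] (a : ℕ → ℝ) (lam : ι → ℝ)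

noncomputable def residual : ℕ → ι → ℝ
  | 0 => lam
  | k + 1 => fun j => residual k j - if argmax (residual k) = j then a k else 0

noncomputable def greedy (k : ℕ) : ι :=
  argmax (residual a lam k)

lemma sum_residual (k : ℕ) :
    ∑ j, residual a lam k j = ∑ j, lam j - ∑ i ∈ range k, a i := by
  induction k with
  | zero => simp [residual]
  | succ k ih =>
    simp only [residual, sum_sub_distrib, ih, sum_ite_eq, mem_univ, if_true, sum_range_succ]
    ring

lemma sum_range_greedy (n : ℕ) (j : ι) :
    ∑ k ∈ range n, (if greedy a lam k = j then a k else 0) = lam j - residual a lam n j := by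
  induction n with
  | zero => simp [residual]
  | succ n ih =>
    rw [sum_range_succ, ih]
    unfold greedy
    simp only [residual]
    ring

lemma residual_nonneg (hlam : ∀ j, 0 ≤ lam j)
    (hstep : ∀ k, Fintype.card ι * a k ≤ ∑ j, lam j - ∑ i ∈ range k, a i) (k : ℕ) (j : ι) :
    0 ≤ residual a lam k j := by
  induction k generalizing j with
  | zero => exact hlam j
  | succ k ih =>
    simp only [residual]
    split_ifs with hj
    · subst hj
      have hcard : (0 : ℝ) < Fintype.card ι := by exact_mod_cast Fintype.card_pos
      have hmax : Fintype.card ι * a k ≤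
          Fintype.card ι * residual a lam k (argmax (residual a lam k)) :=
        calc Fintype.card ι * a k ≤ ∑ i, residual a lam k i := sum_residual a lam k ▸ hstep k
          _ ≤ _ := by simpa using sum_le_sum fun i (_ : i ∈ univ) => le_argmax (residual a lam k) i
      exact sub_nonneg.mpr (le_of_mul_le_mul_left hmax hcard)
    · linarith [ih j]

lemma residual_le_tail (hlam : ∀ j, 0 ≤ lam j)
    (hstep : ∀ k, Fintype.card ι * a k ≤ ∑ j, lam j - ∑ i ∈ range k, a i) (n : ℕ) (j : ι) :
    residual a lam n j ≤ ∑ j, lam j - ∑ i ∈ range n, a i :=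
  sum_residual a lam n ▸
    single_le_sum (fun i _ => residual_nonneg a lam hlam hstep n i) (mem_univ j)

theorem hasSum_greedy (hlam : ∀ j, 0 ≤ lam j) (ha : HasSum a (∑ j, lam j))
    (hstep : ∀ k, Fintype.card ι * a k ≤ ∑ j, lam j - ∑ i ∈ range k, a i) (j : ι) :
    HasSum (fun k => if greedy a lam k = j then a k else 0) (lam j) := by
  have hsummable : Summable fun k => if greedy a lam k = j then a k else 0 :=
    (ha.summable.indicator {k | greedy a lam k = j}).congr fun k => by
      simp [Set.indicator_apply]
  have htail : Tendsto (fun n => ∑ j, lam j - ∑ i ∈ range n, a i) atTop (𝓝 0) := by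
    simpa using (tendsto_const_nhds (x := ∑ j, lam j)).sub ha.tendsto_sum_nat
  have hres : Tendsto (fun n => residual a lam n j) atTop (𝓝 0) :=
    squeeze_zero (fun n => residual_nonneg a lam hlam hstep n j)
      (fun n => residual_le_tail a lam hlam hstep n j) htail
  rw [hsummable.hasSum_iff_tendsto_nat]
  simpa [sum_range_greedy] using (tendsto_const_nhds (x := lam j)).sub hres

end GreedyPartition

lemma hasSum_one_sub_mul_geometric {r : ℝ} (hr0 : 0 ≤ r) (hr1 : r < 1) :
    HasSum (fun k => (1 - r) * r ^ k) 1 := by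
  simpa [mul_inv_cancel₀ (sub_ne_zero.mpr hr1.ne')] using
    (hasSum_geometric_of_lt_one hr0 hr1).mul_left (1 - r)

lemma one_sub_sum_range_one_sub_mul_geometric {R : Type*} [CommRing R] (r : R) (k : ℕ) :
    1 - ∑ i ∈ range k, (1 - r) * r ^ i = r ^ k := by
  rw [← mul_sum, mul_neg_geom_sum, sub_sub_cancel]

/-- Geometric-partition lemma: if `1 - 1/M ≤ r < 1` and the `λ j` are nonnegative
summing to `1`, there is a sequence `x` with values in `Fin M` such that the geometric
mass `∑ (1-r) r^(k-1)` carried on `{k : x k = j}` equals `λ j` for every `j`. -/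
theorem geometric_partition (M : ℕ) (hM : 0 < M) (r : ℝ)
    (hr1 : 1 - 1 / M ≤ r) (hr2 : r < 1)
    (lam : Fin M → ℝ) (hnn : ∀ j, 0 ≤ lam j) (hsum : ∑ j, lam j = 1) :
    ∃ x : ℕ → Fin M, ∀ j : Fin M,
      (∑' k : ℕ, (if x k = j then (1 - r) * r ^ k else 0)) = lam j := by
  have : Nonempty (Fin M) := ⟨⟨0, hM⟩⟩
  have hM' : (1 : ℝ) ≤ M := by exact_mod_cast hM
  have hr0 : 0 ≤ r := by
    have : 1 / (M : ℝ) ≤ 1 := (div_le_one (by linarith)).mpr hM'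
    linarith
  have hMr : M * (1 - r) ≤ 1 := by
    rw [← le_div_iff₀' (by linarith)]
    linarith
  have hstep : ∀ k, Fintype.card (Fin M) * ((1 - r) * r ^ k) ≤
      ∑ j, lam j - ∑ i ∈ range k, (1 - r) * r ^ i := fun k => by
    rw [hsum, one_sub_sum_range_one_sub_mul_geometric, Fintype.card_fin, ← mul_assoc]
    exact mul_le_of_le_one_left (pow_nonneg hr0 k) hMr
  refine ⟨GreedyPartition.greedy (fun k => (1 - r) * r ^ k) lam, fun j => ?_⟩
  refine (GreedyPartition.hasSum_greedy _ lam hnn ?_ hstep j).tsum_eq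
  rw [hsum]
  exact hasSum_one_sub_mul_geometric hr0 hr2
end

section
/- Let M be a positive integer, r ∈ [1-1/M, 1), and λ_1,...,λ_M ≥ 0 with sum 1. If additionally r^d ≥ 1 - min_j λ_j for some positive integer d, then there exist at least M^d distinct sequences x_1, x_2, ... with values in {1,...,M} satisfying ∑_{k=1}^∞ I(x_k = j)(1-r)r^{k-1} = λ_j for all j. -/
open Finset Filter

noncomputable def gpPick (M d : ℕ) [NeZero M] (p : Fin d → Fin M) (k : ℕ) (μ : Fin M → ℝ) : Fin M :=
  if h : k < d then p ⟨k, h⟩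
  else (Finset.univ.exists_max_image μ Finset.univ_nonempty).choose

lemma gpPick_lt {M d : ℕ} [NeZero M] (p : Fin d → Fin M) {k : ℕ} (h : k < d) (μ : Fin M → ℝ) :
    gpPick M d p k μ = p ⟨k, h⟩ := dif_pos h

lemma gpPick_max {M d : ℕ} [NeZero M] (p : Fin d → Fin M) {k : ℕ} (h : ¬ k < d)
    (μ : Fin M → ℝ) (j : Fin M) :
    μ j ≤ μ (gpPick M d p k μ) := by
  rw [gpPick, dif_neg h]
  obtain ⟨-, hb⟩ := (Finset.univ.exists_max_image μ Finset.univ_nonempty).choose_spec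
  exact hb j (mem_univ j)

noncomputable def gpState (M d : ℕ) [NeZero M] (r : ℝ) (lam : Fin M → ℝ) (p : Fin d → Fin M) :
    ℕ → Fin M → ℝ
  | 0 => lam
  | k+1 => fun j => gpState M d r lam p k j -
      (if gpPick M d p k (gpState M d r lam p k) = j then (1-r)*r^k else 0)

noncomputable def gpSeq (M d : ℕ) [NeZero M] (r : ℝ) (lam : Fin M → ℝ) (p : Fin d → Fin M)
    (k : ℕ) : Fin M :=
  gpPick M d p k (gpState M d r lam p k)

lemma gpState_eq (M d : ℕ) [NeZero M] (r : ℝ) (lam : Fin M → ℝ) (p : Fin d → Fin M)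
    (n : ℕ) (j : Fin M) :
    gpState M d r lam p n j
      = lam j - ∑ i ∈ Finset.range n, (if gpSeq M d r lam p i = j then (1-r)*r^i else 0) := by
  induction n with
  | zero => simp [gpState]
  | succ n ih =>
      rw [Finset.sum_range_succ]
      simp only [gpState, gpSeq, ih]
      ring

lemma geom_partial (r : ℝ) (n : ℕ) :
    ∑ i ∈ Finset.range n, (1-r)*r^i = 1 - r^n := by
  rw [← Finset.mul_sum]
  linear_combination -geom_sum_mul r n

lemma gpInvariant {M d : ℕ} [NeZero M] {r : ℝ} {lam : Fin M → ℝ} (p : Fin d → Fin M)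
    (hr0 : 0 ≤ r) (hr2 : r < 1) (hMr : (1 - r) * M ≤ 1)
    (hnn : ∀ j, 0 ≤ lam j) (hsum : ∑ j, lam j = 1)
    (hmin : ∀ j, 1 - r ^ d ≤ lam j) :
    ∀ n, (∀ j, 0 ≤ gpState M d r lam p n j) ∧ (∑ j, gpState M d r lam p n j = r ^ n) := by
  intro n
  induction n with
  | zero => exact ⟨hnn, by simpa [gpState] using hsum⟩
  | succ n ih =>
    obtain ⟨hpos, hsumn⟩ := ih
    have key : (1-r) * r ^ n ≤ gpState M d r lam p n (gpPick M d p n (gpState M d r lam p n)) := by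
      by_cases h : n < d
      · rw [gpPick_lt p h]
        rw [gpState_eq]
        have hS : ∑ i ∈ Finset.range n,
            (if gpSeq M d r lam p i = p ⟨n, h⟩ then (1-r)*r^i else 0) ≤ 1 - r ^ n := by
          rw [← geom_partial r n]
          apply Finset.sum_le_sum
          intro i _
          split
          · exact le_rfl
          · have := pow_nonneg hr0 i
            nlinarith
        have hdl : r ^ d ≤ r ^ (n+1) := pow_le_pow_of_le_one hr0 hr2.le (by omega)
        have hps : (1-r)*r^n = r^n - r^(n+1) := by rw [pow_succ]; ring
        have := hmin (p ⟨n, h⟩)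
        linarith
      · set jm := gpPick M d p n (gpState M d r lam p n) with hjm
        have hmax : ∀ j, gpState M d r lam p n j ≤ gpState M d r lam p n jm :=
          gpPick_max p h _
        have hMn : (0:ℝ) < M := by exact_mod_cast (NeZero.pos M)
        have hsle : r ^ n ≤ M * gpState M d r lam p n jm := by
          calc r ^ n = ∑ j, gpState M d r lam p n j := hsumn.symm
            _ ≤ ∑ _j : Fin M, gpState M d r lam p n jm :=
                Finset.sum_le_sum fun j _ => hmax j
            _ = M * gpState M d r lam p n jm := by
                simp [Finset.sum_const, Finset.card_univ, mul_comm]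
        have hrn : (0:ℝ) ≤ r ^ n := pow_nonneg hr0 n
        nlinarith
    refine ⟨?_, ?_⟩
    · intro j
      show 0 ≤ gpState M d r lam p n j - _
      split
      · next hpj => rw [← hpj]; linarith
      · linarith [hpos j]
    · show ∑ j, (gpState M d r lam p n j - _) = _
      rw [Finset.sum_sub_distrib, hsumn, Finset.sum_ite_eq, if_pos (mem_univ _)]
      ring

/-- If moreover `r^d ≥ 1 - min_j λ_j` for a positive integer `d`, then there are at
least `M^d` distinct sequences realizing the geometric partition. -/
theorem geometric_partition_count (M : ℕ) (hM : 0 < M) (r : ℝ)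
    (hr1 : 1 - 1 / M ≤ r) (hr2 : r < 1)
    (lam : Fin M → ℝ) (hnn : ∀ j, 0 ≤ lam j) (hsum : ∑ j, lam j = 1)
    (d : ℕ) (hd : 0 < d)
    (hrd : 1 - Finset.univ.inf' (Finset.univ_nonempty_iff.mpr (Fin.pos_iff_nonempty.mp hM)) lam ≤ r ^ d) :
    ∃ F : Fin (M ^ d) → (ℕ → Fin M), Function.Injective F ∧
      ∀ a : Fin (M ^ d), ∀ j : Fin M,
        (∑' k : ℕ, (if F a k = j then (1 - r) * r ^ k else 0)) = lam j := by
  haveI : NeZero M := ⟨hM.ne'⟩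
  have hM1 : (1:ℝ) ≤ M := by exact_mod_cast hM
  have hM0 : (0:ℝ) < M := by linarith
  have hr0 : 0 ≤ r := by
    have : (1:ℝ)/M ≤ 1 := by rw [div_le_one hM0]; linarith
    linarith
  have hMr : (1 - r) * M ≤ 1 := by
    have h1 : 1 - r ≤ 1 / M := by linarith
    calc (1 - r) * M ≤ (1/M) * M := mul_le_mul_of_nonneg_right h1 hM0.le
      _ = 1 := by field_simp
  have hmin : ∀ j, 1 - r ^ d ≤ lam j := by
    intro j
    have h2 : Finset.univ.inf'
        (Finset.univ_nonempty_iff.mpr (Fin.pos_iff_nonempty.mp hM)) lam ≤ lam j :=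
      Finset.inf'_le lam (Finset.mem_univ j)
    linarith
  refine ⟨fun a => gpSeq M d r lam (finFunctionFinEquiv.symm a), ?_, ?_⟩
  · intro a b hab
    apply finFunctionFinEquiv.symm.injective
    funext i
    have hi := congrFun hab i.val
    simp only [gpSeq] at hi
    rw [gpPick_lt _ i.isLt, gpPick_lt _ i.isLt] at hi
    simpa using hi
  · intro a j
    set p := finFunctionFinEquiv.symm a with hp
    set f : ℕ → ℝ := fun k => if gpSeq M d r lam p k = j then (1-r)*r^k else 0 with hf
    have hf0 : ∀ k, 0 ≤ f k := by
      intro k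
      simp only [hf]
      split
      · have : (0:ℝ) ≤ r ^ k := pow_nonneg hr0 k
        nlinarith
      · exact le_rfl
    have hfle : ∀ k, f k ≤ (1-r) * r ^ k := by
      intro k
      simp only [hf]
      split
      · exact le_rfl
      · have : (0:ℝ) ≤ r ^ k := pow_nonneg hr0 k
        nlinarith
    have hsummable : Summable f :=
      Summable.of_nonneg_of_le hf0 hfle
        (((summable_geometric_of_lt_one hr0 hr2)).mul_left (1-r))
    have hinv := gpInvariant p hr0 hr2 hMr hnn hsum hmin
    have hstate0 : Tendsto (fun n => gpState M d r lam p n j) atTop (nhds 0) := by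
      have hub : ∀ n, gpState M d r lam p n j ≤ r ^ n := by
        intro n
        have h1 := (hinv n).2
        have h2 := Finset.single_le_sum (f := gpState M d r lam p n)
          (fun i _ => (hinv n).1 i) (Finset.mem_univ j)
        linarith
      exact squeeze_zero (fun n => (hinv n).1 j) hub
        (tendsto_pow_atTop_nhds_zero_of_lt_one hr0 hr2)
    have heq : (fun n => ∑ i ∈ Finset.range n, f i)
        = fun n => lam j - gpState M d r lam p n j := by
      funext n
      rw [gpState_eq]
      ring
    have hlim : Tendsto (fun n => ∑ i ∈ Finset.range n, f i) atTop (nhds (lam j)) := by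
      rw [heq]
      have := (tendsto_const_nhds (x := lam j) (f := atTop (α := ℕ))).sub hstate0
      simpa using this
    exact tendsto_nhds_unique hsummable.hasSum.tendsto_sum_nat hlim
end

section
/- In the two-box search game with equal search times t and equal detection probabilities q = (1-r) where r = 1/3, the search sequence ξ = 1,2,(2,2,1,1) (starting with box 1 then box 2, then repeating the cycle 2,2,1,1 indefinitely) gives expected search time u(1,ξ) = u(2,ξ) = 2 + r + (r² + 3r³)/(1 − r²) = 31/12 (in units of t). -/
def xi : ℕ → Fin 2 := fun k =>
  if k = 0 then 0 else if k = 1 then 1 else if (k - 2) % 4 < 2 then 1 else 0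

lemma xi02 (m : ℕ) : xi (4*m+2) = 1 := by
  unfold xi
  have h : (4*m+2-2) % 4 = 0 := by omega
  rw [if_neg (by omega), if_neg (by omega), if_pos (by omega)]
lemma xi03 (m : ℕ) : xi (4*m+3) = 1 := by
  unfold xi
  have h : (4*m+3-2) % 4 = 1 := by omega
  rw [if_neg (by omega), if_neg (by omega), if_pos (by omega)]
lemma xi04 (m : ℕ) : xi (4*m+4) = 0 := by
  unfold xi
  have h : (4*m+4-2) % 4 = 2 := by omega
  rw [if_neg (by omega), if_neg (by omega), if_neg (by omega)]
lemma xi05 (m : ℕ) : xi (4*m+5) = 0 := by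
  unfold xi
  have h : (4*m+5-2) % 4 = 3 := by omega
  rw [if_neg (by omega), if_neg (by omega), if_neg (by omega)]
lemma xi06 (m : ℕ) : xi (4*m+6) = 1 := by
  unfold xi
  have h : (4*m+6-2) % 4 = 0 := by omega
  rw [if_neg (by omega), if_neg (by omega), if_pos (by omega)]
lemma xi07 (m : ℕ) : xi (4*m+7) = 1 := by
  unfold xi
  have h : (4*m+7-2) % 4 = 1 := by omega
  rw [if_neg (by omega), if_neg (by omega), if_pos (by omega)]

lemma count0 (m : ℕ) :
    Nat.count (fun k => xi k = 0) (4*m+4) = 2*m+1 ∧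
    Nat.count (fun k => xi k = 0) (4*m+5) = 2*m+2 := by
  induction m with
  | zero => constructor <;> decide
  | succ m ih =>
    have h4 : xi (4*m+4) = 0 := xi04 m
    have h5 : xi (4*m+4+1) = 0 := by rw [show 4*m+4+1 = 4*m+5 by ring]; exact xi05 m
    have h6 : xi (4*m+4+1+1) = 1 := by rw [show 4*m+4+1+1 = 4*m+6 by ring]; exact xi06 m
    have h7 : xi (4*m+4+1+1+1) = 1 := by rw [show 4*m+4+1+1+1 = 4*m+7 by ring]; exact xi07 m
    have h8 : xi (4*m+4+1+1+1+1) = 0 := by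
      rw [show 4*m+4+1+1+1+1 = 4*(m+1)+4 by ring]; exact xi04 (m+1)
    constructor
    · rw [show 4*(m+1)+4 = 4*m+4+1+1+1+1 by ring,
        Nat.count_succ, Nat.count_succ, Nat.count_succ, Nat.count_succ, ih.1]
      simp only [h4, h5, h6, h7]
      norm_num
      omega
    · rw [show 4*(m+1)+5 = 4*m+4+1+1+1+1+1 by ring,
        Nat.count_succ, Nat.count_succ, Nat.count_succ, Nat.count_succ, Nat.count_succ, ih.1]
      simp only [h4, h5, h6, h7, h8]
      norm_num
      omega

lemma count1 (m : ℕ) :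
    Nat.count (fun k => xi k = 1) (4*m+2) = 2*m+1 ∧
    Nat.count (fun k => xi k = 1) (4*m+3) = 2*m+2 := by
  induction m with
  | zero => constructor <;> decide
  | succ m ih =>
    have h2 : xi (4*m+2) = 1 := xi02 m
    have h3 : xi (4*m+2+1) = 1 := by rw [show 4*m+2+1 = 4*m+3 by ring]; exact xi03 m
    have h4 : xi (4*m+2+1+1) = 0 := by rw [show 4*m+2+1+1 = 4*m+4 by ring]; exact xi04 m
    have h5 : xi (4*m+2+1+1+1) = 0 := by rw [show 4*m+2+1+1+1 = 4*m+5 by ring]; exact xi05 m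
    have h6 : xi (4*m+2+1+1+1+1) = 1 := by
      rw [show 4*m+2+1+1+1+1 = 4*(m+1)+2 by ring]; exact xi02 (m+1)
    constructor
    · rw [show 4*(m+1)+2 = 4*m+2+1+1+1+1 by ring,
        Nat.count_succ, Nat.count_succ, Nat.count_succ, Nat.count_succ, ih.1]
      simp only [h2, h3, h4, h5]
      norm_num
      omega
    · rw [show 4*(m+1)+3 = 4*m+2+1+1+1+1+1 by ring,
        Nat.count_succ, Nat.count_succ, Nat.count_succ, Nat.count_succ, Nat.count_succ, ih.1]
      simp only [h2, h3, h4, h5, h6]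
      norm_num
      omega

lemma nth0_zero : Nat.nth (fun k => xi k = 0) 0 = 0 :=
  Nat.nth_zero_of_zero rfl
lemma nth0_odd (m : ℕ) : Nat.nth (fun k => xi k = 0) (2*m+1) = 4*m+4 := by
  have := Nat.nth_count (p := fun k => xi k = 0) (n := 4*m+4) (xi04 m)
  rwa [(count0 m).1] at this
lemma nth0_even (m : ℕ) : Nat.nth (fun k => xi k = 0) (2*m+2) = 4*m+5 := by
  have := Nat.nth_count (p := fun k => xi k = 0) (n := 4*m+5) (xi05 m)
  rwa [(count0 m).2] at this
lemma nth1_zero : Nat.nth (fun k => xi k = 1) 0 = 1 := by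
  have := Nat.nth_count (p := fun k => xi k = 1) (n := 1) rfl
  rwa [show Nat.count (fun k => xi k = 1) 1 = 0 from by decide] at this
lemma nth1_odd (m : ℕ) : Nat.nth (fun k => xi k = 1) (2*m+1) = 4*m+2 := by
  have := Nat.nth_count (p := fun k => xi k = 1) (n := 4*m+2) (xi02 m)
  rwa [(count1 m).1] at this
lemma nth1_even (m : ℕ) : Nat.nth (fun k => xi k = 1) (2*m+2) = 4*m+3 := by
  have := Nat.nth_count (p := fun k => xi k = 1) (n := 4*m+3) (xi03 m)
  rwa [(count1 m).2] at this

lemma geo_s : Summable (fun m : ℕ => ((1:ℝ)/9)^m) :=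
  summable_geometric_of_lt_one (by norm_num) (by norm_num)
lemma mgeo_s : Summable (fun m : ℕ => (m:ℝ) * (1/9)^m) :=
  (hasSum_coe_mul_geometric_of_norm_lt_one (by rw [Real.norm_eq_abs, abs_of_pos] <;> norm_num)).summable
lemma lin_s (a b : ℝ) : Summable (fun m : ℕ => (a*m+b)*((1:ℝ)/9)^m) := by
  have : (fun m : ℕ => (a*m+b)*((1:ℝ)/9)^m)
      = fun m : ℕ => a*((m:ℝ)*(1/9)^m) + b*((1/9)^m) := by funext m; ring
  rw [this]
  exact ((mgeo_s.mul_left a).add (geo_s.mul_left b))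
lemma lin_t (a b : ℝ) : ∑' m : ℕ, (a*m+b)*((1:ℝ)/9)^m = a*(9/64)+b*(9/8) := by
  have h1 : ∑' m : ℕ, (m:ℝ)*(1/9)^m = 9/64 := by
    rw [tsum_coe_mul_geometric_of_norm_lt_one (by rw [Real.norm_eq_abs, abs_of_pos] <;> norm_num)]
    norm_num
  have h2 : ∑' m : ℕ, ((1:ℝ)/9)^m = 9/8 := by
    rw [tsum_geometric_of_lt_one (by norm_num) (by norm_num)]; norm_num
  have e : (fun m : ℕ => (a*m+b)*((1:ℝ)/9)^m)
      = fun m : ℕ => a*((m:ℝ)*(1/9)^m) + b*((1/9)^m) := by funext m; ring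
  rw [e, Summable.tsum_add (mgeo_s.mul_left a) (geo_s.mul_left b), tsum_mul_left, tsum_mul_left, h1, h2]

lemma pow_odd (m : ℕ) : ((1:ℝ)/3)^(2*m+1) = (1/3)*(1/9)^m := by
  rw [pow_succ, pow_mul]; norm_num [mul_comm]
lemma pow_even (m : ℕ) : ((1:ℝ)/3)^(2*m+2) = (1/9)*(1/9)^m := by
  rw [show 2*m+2 = 2*m+1+1 by ring, pow_succ, pow_odd]; ring

lemma tri_s : Summable (fun m : ℕ => (3*(m:ℝ)+4)*((1:ℝ)/3)^m) := by
  have e : (fun m : ℕ => (3*(m:ℝ)+4)*((1:ℝ)/3)^m)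
      = fun m : ℕ => 3*((m:ℝ)*(1/3)^m) + 4*((1/3)^m) := by funext m; ring
  rw [e]
  exact (((hasSum_coe_mul_geometric_of_norm_lt_one
      (r := (1:ℝ)/3) (by rw [Real.norm_eq_abs, abs_of_pos] <;> norm_num)).summable.mul_left 3).add
    ((summable_geometric_of_lt_one (by norm_num) (by norm_num)).mul_left 4))

lemma summable_F (p : ℕ → Prop) (hb : ∀ ℓ, Nat.nth p ℓ ≤ 2*ℓ+3) :
    Summable (fun ℓ : ℕ => ((1:ℝ)/3)^ℓ * (1 - 1/3) * ((Nat.nth p ℓ : ℝ)+1)) := by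
  refine Summable.of_nonneg_of_le (fun ℓ => by positivity) (fun ℓ => ?_) tri_s
  have h : ((Nat.nth p ℓ : ℝ)+1) ≤ 2*ℓ+4 := by
    have := hb ℓ
    push_cast
    exact_mod_cast by push_cast; linarith [(show ((Nat.nth p ℓ : ℝ)) ≤ 2*ℓ+3 by exact_mod_cast this)]
  calc ((1:ℝ)/3)^ℓ * (1 - 1/3) * ((Nat.nth p ℓ : ℝ)+1)
      ≤ (1/3)^ℓ * 1 * (2*ℓ+4) := by
        apply mul_le_mul
        · apply mul_le_mul_of_nonneg_left (by norm_num) (by positivity)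
        · exact h
        · positivity
        · positivity
    _ ≤ (3*(ℓ:ℝ)+4)*((1:ℝ)/3)^ℓ := by rw [mul_one]; nlinarith [pow_pos (show (0:ℝ) < 1/3 by norm_num) ℓ]

lemma hb0 : ∀ ℓ, Nat.nth (fun k => xi k = 0) ℓ ≤ 2*ℓ+3 := by
  intro ℓ
  rcases Nat.even_or_odd ℓ with ⟨m, hm⟩ | ⟨m, hm⟩
  · rcases m with _ | n
    · simp only [hm]; simp [nth0_zero]
    · rw [show ℓ = 2*n+2 by omega, nth0_even]; omega
  · rw [show ℓ = 2*m+1 by omega, nth0_odd]; omega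

lemma hb1 : ∀ ℓ, Nat.nth (fun k => xi k = 1) ℓ ≤ 2*ℓ+3 := by
  intro ℓ
  rcases Nat.even_or_odd ℓ with ⟨m, hm⟩ | ⟨m, hm⟩
  · rcases m with _ | n
    · simp only [hm]; simp [nth1_zero]
    · rw [show ℓ = 2*n+2 by omega, nth1_even]; omega
  · rw [show ℓ = 2*m+1 by omega, nth1_odd]; omega

set_option maxHeartbeats 1000000 in
/-- Two boxes, unit search times, `r = 1/3` (so `q = 2/3`).  The search sequence
`ξ = 1,2,(2,2,1,1)` (0-indexed boxes `0,1`, positions `0,1,2,...`) gives expected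
search time `u(i,ξ) = ∑_ℓ r^ℓ (1-r) (T_i^{ℓ+1}) = 31/12` for both boxes, where
`T_i^{ℓ+1}` is the (1-indexed) position of the `(ℓ+1)`-th search of box `i`,
computed via `Nat.nth`. -/
theorem best_pure_r_third :
    letI ξ : ℕ → Fin 2 := fun k =>
      if k = 0 then 0 else if k = 1 then 1 else if (k - 2) % 4 < 2 then 1 else 0
    letI r : ℝ := 1 / 3
    ∀ i : Fin 2,
      (∑' ℓ : ℕ, r ^ ℓ * (1 - r) * ((Nat.nth (fun k => ξ k = i) ℓ : ℝ) + 1))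
        = 31 / 12 := by
  intro i
  fin_cases i
  · show (∑' ℓ : ℕ, ((1:ℝ)/3)^ℓ * (1 - 1/3) * ((Nat.nth (fun k => xi k = 0) ℓ : ℝ) + 1)) = 31/12
    set F : ℕ → ℝ :=
      fun ℓ => ((1:ℝ)/3)^ℓ * (1 - 1/3) * ((Nat.nth (fun k => xi k = 0) ℓ : ℝ) + 1) with hF
    have hS : Summable F := summable_F _ hb0
    have hodd : ∀ m : ℕ, F (2*m+1) = ((8/9)*m + 10/9)*((1:ℝ)/9)^m := by
      intro m
      simp only [hF, nth0_odd m, pow_odd]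
      push_cast; ring
    have heven : ∀ m : ℕ, F (2*m+1+1) = ((8/27)*m + 4/9)*((1:ℝ)/9)^m := by
      intro m
      rw [show 2*m+1+1 = 2*m+2 by ring]
      simp only [hF, nth0_even m, pow_even]
      push_cast; ring
    have h0 : F 0 = 2/3 := by simp [hF, nth0_zero]; norm_num
    have he : Summable (fun k : ℕ => F (2*k+1)) :=
      (lin_s (8/9) (10/9)).congr fun m => (hodd m).symm
    have ho : Summable (fun k : ℕ => F (2*k+1+1)) :=
      (lin_s (8/27) (4/9)).congr fun m => (heven m).symm
    rw [Summable.tsum_eq_zero_add hS, ← tsum_even_add_odd (f := fun ℓ => F (ℓ+1)) he ho, tsum_congr hodd, tsum_congr heven,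
      lin_t, lin_t, h0]
    norm_num
  · simp only [Fin.mk_one, Fin.isValue]
    show (∑' ℓ : ℕ, ((1:ℝ)/3)^ℓ * (1 - 1/3) * ((Nat.nth (fun k => xi k = 1) ℓ : ℝ) + 1)) = 31/12
    set F : ℕ → ℝ :=
      fun ℓ => ((1:ℝ)/3)^ℓ * (1 - 1/3) * ((Nat.nth (fun k => xi k = 1) ℓ : ℝ) + 1) with hF
    have hS : Summable F := summable_F _ hb1
    have hodd : ∀ m : ℕ, F (2*m+1) = ((8/9)*m + 6/9)*((1:ℝ)/9)^m := by
      intro m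
      simp only [hF, nth1_odd m, pow_odd]
      push_cast; ring
    have heven : ∀ m : ℕ, F (2*m+1+1) = ((8/27)*m + 8/27)*((1:ℝ)/9)^m := by
      intro m
      rw [show 2*m+1+1 = 2*m+2 by ring]
      simp only [hF, nth1_even m, pow_even]
      push_cast; ring
    have h0 : F 0 = 4/3 := by simp [hF, nth1_zero]; norm_num
    have he : Summable (fun k : ℕ => F (2*k+1)) :=
      (lin_s (8/9) (6/9)).congr fun m => (hodd m).symm
    have ho : Summable (fun k : ℕ => F (2*k+1+1)) :=
      (lin_s (8/27) (8/27)).congr fun m => (heven m).symm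
    rw [Summable.tsum_eq_zero_add hS, ← tsum_even_add_odd (f := fun ℓ => F (ℓ+1)) he ho, tsum_congr hodd, tsum_congr heven,
      lin_t, lin_t, h0]
    norm_num
end

section
/- Let t_1 ≤ t_2 be positive reals with t_1/(t_1+t_2) < 1/4, and let q satisfy 1 − √(t_1/(t_1+t_2)) < q < (1/2)(√(1 − 4t_1/(t_1+t_2)) + 1). Set r = 1 − q. Then there is no 0-1 sequence (γ_k)_{k≥1} satisfying simultaneously q·∑_{k=1}^∞ γ_k r^{k-1} = t_1/(t_1+t_2) and q·∑_{k=1}^∞ (1−γ_k) r^{k-1} = t_2/(t_1+t_2). -/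
/-!
Put `a = t₁/(t₁+t₂)` and `r = 1 - q`. The bounds on `q` say exactly that `r² < a < q r`,
and `a < 1/4` forces `q > 1/2 > a`. Whatever the first two digits of `γ` are, one of the
sums is too large: `γ₀ = 1` gives `q ≤ a`, `γ₁ = 1` gives `q r ≤ a`, and `γ₀ = γ₁ = 0`
gives `q (1 + r) ≤ 1 - a`, i.e. `a ≤ r²`.
-/

open Real

section ZeroOneSeries

variable {r : ℝ}

lemma sum_pow_le_tsum_mul_pow (hr0 : 0 ≤ r) (hr1 : r < 1) {w : ℕ → ℝ}
    (hw : ∀ k, w k ∈ Set.Icc (0 : ℝ) 1) {s : Finset ℕ} (hs : ∀ k ∈ s, w k = 1) :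
    ∑ k ∈ s, r ^ k ≤ ∑' k, w k * r ^ k := by
  have hnonneg : ∀ k, 0 ≤ w k * r ^ k := fun k => mul_nonneg (hw k).1 (pow_nonneg hr0 k)
  have hsummable : Summable fun k => w k * r ^ k :=
    (summable_geometric_of_lt_one hr0 hr1).of_nonneg_of_le hnonneg
      fun k => mul_le_of_le_one_left (pow_nonneg hr0 k) (hw k).2
  calc ∑ k ∈ s, r ^ k = ∑ k ∈ s, w k * r ^ k :=
        Finset.sum_congr rfl fun k hk => by rw [hs k hk, one_mul]
    _ ≤ ∑' k, w k * r ^ k := hsummable.sum_le_tsum s fun k _ => hnonneg k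

lemma one_le_or_le_or_one_add_le_tsum (hr0 : 0 ≤ r) (hr1 : r < 1) {γ : ℕ → ℝ}
    (hγ : ∀ k, γ k = 0 ∨ γ k = 1) :
    1 ≤ ∑' k, γ k * r ^ k ∨ r ≤ ∑' k, γ k * r ^ k ∨ 1 + r ≤ ∑' k, (1 - γ k) * r ^ k := by
  have hγ_mem : ∀ k, γ k ∈ Set.Icc (0 : ℝ) 1 := fun k => by
    rcases hγ k with h | h <;> simp [h]
  have hγ'_mem : ∀ k, 1 - γ k ∈ Set.Icc (0 : ℝ) 1 := fun k => by
    rcases hγ k with h | h <;> simp [h]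
  rcases hγ 0 with h0 | h0
  · rcases hγ 1 with h1 | h1
    · right; right
      simpa using sum_pow_le_tsum_mul_pow hr0 hr1 hγ'_mem (s := {0, 1}) (by simp [h0, h1])
    · right; left
      simpa using sum_pow_le_tsum_mul_pow hr0 hr1 hγ_mem (s := {1}) (by simp [h1])
  · left
    simpa using sum_pow_le_tsum_mul_pow hr0 hr1 hγ_mem (s := {0}) (by simp [h0])

end ZeroOneSeries

section Bounds

variable {a q : ℝ}

lemma half_lt_of_one_sub_sqrt_lt (ha : a < 1 / 4) (hq : 1 - √a < q) : 1 / 2 < q := by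
  have : √a < 1 / 2 := (sqrt_lt' (by norm_num)).2 (by linarith)
  linarith

lemma sq_one_sub_lt_of_one_sub_sqrt_lt (hq1 : q ≤ 1) (hq : 1 - √a < q) : (1 - q) ^ 2 < a :=
  (lt_sqrt (by linarith)).1 (by linarith)

lemma lt_mul_one_sub_of_lt_half_mul_sqrt_add_one (hq : 1 / 2 < q)
    (hq' : q < 1 / 2 * (√(1 - 4 * a) + 1)) : a < q * (1 - q) := by
  have : (2 * q - 1) ^ 2 < 1 - 4 * a := (lt_sqrt (by linarith)).1 (by linarith)
  nlinarith

end Bounds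

/-- Non-existence of an optimal pure strategy for two boxes: if
`t₁/(t₁+t₂) < 1/4` and `1 − √(t₁/(t₁+t₂)) < q < (1 + √(1 − 4 t₁/(t₁+t₂)))/2`,
then no 0-1 sequence `γ` satisfies both
`q ∑_k γ_k r^(k-1) = t₁/(t₁+t₂)` and `q ∑_k (1−γ_k) r^(k-1) = t₂/(t₁+t₂)`. -/
theorem no_equalizing_sequence (t₁ t₂ : ℝ) (ht₁ : 0 < t₁) (h12 : t₁ ≤ t₂)
    (ha : t₁ / (t₁ + t₂) < 1 / 4) (q : ℝ)
    (hq1 : 1 - Real.sqrt (t₁ / (t₁ + t₂)) < q)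
    (hq2 : q < (1 / 2) * (Real.sqrt (1 - 4 * t₁ / (t₁ + t₂)) + 1))
    (r : ℝ) (hr : r = 1 - q) :
    ¬ ∃ γ : ℕ → ℝ, (∀ k, γ k = 0 ∨ γ k = 1) ∧
        q * (∑' k : ℕ, γ k * r ^ k) = t₁ / (t₁ + t₂) ∧
        q * (∑' k : ℕ, (1 - γ k) * r ^ k) = t₂ / (t₁ + t₂) := by
  rintro ⟨γ, hγ, h1, h2⟩
  have hsum : 0 < t₁ + t₂ := by linarith
  rw [show t₂ / (t₁ + t₂) = 1 - t₁ / (t₁ + t₂) by field_simp; ring] at h2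
  set a := t₁ / (t₁ + t₂)
  have ha0 : 0 < a := div_pos ht₁ hsum
  rw [mul_div_assoc] at hq2
  have hq_half := half_lt_of_one_sub_sqrt_lt ha hq1
  have hqr := lt_mul_one_sub_of_lt_half_mul_sqrt_add_one hq_half hq2
  have hq_lt_one : q < 1 := by nlinarith
  have hr_sq := sq_one_sub_lt_of_one_sub_sqrt_lt hq_lt_one.le hq1
  subst hr
  rcases one_le_or_le_or_one_add_le_tsum (r := 1 - q) (by linarith) (by linarith) hγ with
    h_one_le | h_r_le | h_one_add_r_le
  · nlinarith
  · nlinarith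
  · nlinarith
end

section
/- In the two-box search game with t_1 = t_2 = 1 and q_1 = q_2 = 1/2, the search sequence ξ' = 1,2,1,2,2,2,2,1,1,2,1,2,1,1,1,2,(2,1) satisfies u(1,ξ') = u(2,ξ') = 923/256. -/
namespace EqAux

def xi (k : ℕ) : Fin 2 :=
  if k < 16 then ([0, 1, 0, 1, 1, 1, 1, 0, 0, 1, 0, 1, 0, 0, 0, 1] : List (Fin 2)).getD k 0
  else if k % 2 = 0 then 1 else 0

def f0 (n : ℕ) : ℕ := if n < 8 then [0, 2, 7, 8, 10, 12, 13, 14].getD n 0 else 2 * n + 1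
def f1 (n : ℕ) : ℕ := if n < 8 then [1, 3, 4, 5, 6, 9, 11, 15].getD n 0 else 2 * n

lemma xi_large {k : ℕ} (h : 16 ≤ k) : xi k = if k % 2 = 0 then 1 else 0 := by
  unfold xi; rw [if_neg (by omega)]

lemma count0 : ∀ m, Nat.count (fun k => xi k = 0) (2 * m + 17) = m + 8 := by
  intro m
  induction m with
  | zero => decide
  | succ m ih =>
      have h1 : xi (2 * m + 17) = 0 := by
        rw [xi_large (by omega), if_neg (by omega)]
      have h2 : ¬ xi (2 * m + 18) = 0 := by
        rw [xi_large (by omega), if_pos (by omega)]; decide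
      have e : 2 * (m + 1) + 17 = (2 * m + 17) + 1 + 1 := by ring
      rw [e, Nat.count_succ, Nat.count_succ, ih, if_pos h1, if_neg h2]

lemma count1 : ∀ m, Nat.count (fun k => xi k = 1) (2 * m + 16) = m + 8 := by
  intro m
  induction m with
  | zero => decide
  | succ m ih =>
      have h1 : xi (2 * m + 16) = 1 := by
        rw [xi_large (by omega), if_pos (by omega)]
      have h2 : ¬ xi (2 * m + 17) = 1 := by
        rw [xi_large (by omega), if_neg (by omega)]; decide
      have e : 2 * (m + 1) + 16 = (2 * m + 16) + 1 + 1 := by ring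
      rw [e, Nat.count_succ, Nat.count_succ, ih, if_pos h1, if_neg h2]

lemma nth0 (n : ℕ) : Nat.nth (fun k => xi k = 0) n = f0 n := by
  have hp : xi (f0 n) = 0 := by
    by_cases h : n < 8
    · interval_cases n <;> decide
    · simp only [f0, if_neg h]
      rw [xi_large (by omega), if_neg (by omega)]
  have hc : Nat.count (fun k => xi k = 0) (f0 n) = n := by
    by_cases h : n < 8
    · interval_cases n <;> decide
    · obtain ⟨m, rfl⟩ : ∃ m, n = m + 8 := ⟨n - 8, by omega⟩
      have e : f0 (m + 8) = 2 * m + 17 := by simp only [f0, if_neg (by omega : ¬ m + 8 < 8)]; ring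
      rw [e, count0]
  have h := Nat.nth_count (p := fun k => xi k = 0) hp; rwa [hc] at h

lemma nth1 (n : ℕ) : Nat.nth (fun k => xi k = 1) n = f1 n := by
  have hp : xi (f1 n) = 1 := by
    by_cases h : n < 8
    · interval_cases n <;> decide
    · simp only [f1, if_neg h]
      rw [xi_large (by omega), if_pos (by omega)]
  have hc : Nat.count (fun k => xi k = 1) (f1 n) = n := by
    by_cases h : n < 8
    · interval_cases n <;> decide
    · obtain ⟨m, rfl⟩ : ∃ m, n = m + 8 := ⟨n - 8, by omega⟩
      have e : f1 (m + 8) = 2 * m + 16 := by simp only [f1, if_neg (by omega : ¬ m + 8 < 8)]; ring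
      rw [e, count1]
  have h := Nat.nth_count (p := fun k => xi k = 1) hp; rwa [hc] at h

lemma summable_aux (a b : ℝ) : Summable (fun n : ℕ => (1 / 2 : ℝ) ^ (n + 9) * (a * n + b)) := by
  have h1 : Summable (fun n : ℕ => (n : ℝ) * (1 / 2) ^ n) := by
    have := summable_pow_mul_geometric_of_norm_lt_one (R := ℝ) 1 (r := (1 / 2 : ℝ))
      (by rw [Real.norm_eq_abs]; norm_num [abs_lt])
    simpa using this
  have h2 : Summable (fun n : ℕ => ((1 : ℝ) / 2) ^ n) :=
    summable_geometric_of_lt_one (by norm_num) (by norm_num)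
  refine ((h1.mul_left (a / 512)).add (h2.mul_left (b / 512))).congr fun n => ?_
  ring

lemma tsum_aux (a b : ℝ) :
    ∑' n : ℕ, (1 / 2 : ℝ) ^ (n + 9) * (a * n + b) = (a + b) / 256 := by
  have h1 : Summable (fun n : ℕ => (n : ℝ) * (1 / 2) ^ n) := by
    have := summable_pow_mul_geometric_of_norm_lt_one (R := ℝ) 1 (r := (1 / 2 : ℝ))
      (by rw [Real.norm_eq_abs]; norm_num [abs_lt])
    simpa using this
  have h2 : Summable (fun n : ℕ => ((1 : ℝ) / 2) ^ n) :=
    summable_geometric_of_lt_one (by norm_num) (by norm_num)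
  have e : ∀ n : ℕ, (1 / 2 : ℝ) ^ (n + 9) * (a * n + b)
      = a / 512 * ((n : ℝ) * (1 / 2) ^ n) + b / 512 * ((1 / 2 : ℝ) ^ n) := by
    intro n; ring
  rw [tsum_congr e, Summable.tsum_add (h1.mul_left _) (h2.mul_left _), tsum_mul_left, tsum_mul_left,
    tsum_coe_mul_geometric_of_norm_lt_one (by rw [Real.norm_eq_abs]; norm_num [abs_lt]),
    tsum_geometric_of_lt_one (by norm_num) (by norm_num)]
  norm_num
  ring

lemma main0 :
    (∑' n : ℕ, (1 / 2 : ℝ) ^ (n + 1) * ((Nat.nth (fun k => EqAux.xi k = 0) n : ℝ) + 1))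
      = 923 / 256 := by
  rw [tsum_congr (fun n => by rw [EqAux.nth0 n])]
  have S : Summable (fun n : ℕ => (1 / 2 : ℝ) ^ (n + 1) * ((EqAux.f0 n : ℝ) + 1)) := by
    rw [← summable_nat_add_iff 8]
    refine (EqAux.summable_aux 2 18).congr fun n => ?_
    have : EqAux.f0 (n + 8) = 2 * n + 17 := by
      simp only [EqAux.f0, if_neg (by omega : ¬ n + 8 < 8)]; ring
    rw [this]; push_cast; ring
  rw [← Summable.sum_add_tsum_nat_add 8 S]
  have ht : (∑' n : ℕ, (1 / 2 : ℝ) ^ (n + 8 + 1) * ((EqAux.f0 (n + 8) : ℝ) + 1))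
      = (2 + 18) / 256 := by
    rw [← EqAux.tsum_aux 2 18]
    refine tsum_congr fun n => ?_
    have : EqAux.f0 (n + 8) = 2 * n + 17 := by
      simp only [EqAux.f0, if_neg (by omega : ¬ n + 8 < 8)]; ring
    rw [this]; push_cast; ring
  rw [ht]
  norm_num [Finset.sum_range_succ, EqAux.f0]

lemma main1 :
    (∑' n : ℕ, (1 / 2 : ℝ) ^ (n + 1) * ((Nat.nth (fun k => EqAux.xi k = 1) n : ℝ) + 1))
      = 923 / 256 := by
  rw [tsum_congr (fun n => by rw [EqAux.nth1 n])]
  have S : Summable (fun n : ℕ => (1 / 2 : ℝ) ^ (n + 1) * ((EqAux.f1 n : ℝ) + 1)) := by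
    rw [← summable_nat_add_iff 8]
    refine (EqAux.summable_aux 2 17).congr fun n => ?_
    have : EqAux.f1 (n + 8) = 2 * n + 16 := by
      simp only [EqAux.f1, if_neg (by omega : ¬ n + 8 < 8)]; ring
    rw [this]; push_cast; ring
  rw [← Summable.sum_add_tsum_nat_add 8 S]
  have ht : (∑' n : ℕ, (1 / 2 : ℝ) ^ (n + 8 + 1) * ((EqAux.f1 (n + 8) : ℝ) + 1))
      = (2 + 17) / 256 := by
    rw [← EqAux.tsum_aux 2 17]
    refine tsum_congr fun n => ?_
    have : EqAux.f1 (n + 8) = 2 * n + 16 := by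
      simp only [EqAux.f1, if_neg (by omega : ¬ n + 8 < 8)]; ring
    rw [this]; push_cast; ring
  rw [ht]
  norm_num [Finset.sum_range_succ, EqAux.f1]


end EqAux

/-- Two boxes, unit times, `q = 1/2`.  The equalizing sequence
`ξ' = 1,2,1,2,2,2,2,1,1,2,1,2,1,1,1,2,(2,1)` (0-indexed boxes `0,1`) satisfies
`u(1,ξ') = u(2,ξ') = 923/256`, where
`u(i,ξ) = ∑_ℓ (1/2)^(ℓ+1) (T_i^{ℓ+1})` with `T_i^{ℓ+1}` the (1-indexed) position
of the `(ℓ+1)`-th search of box `i`, computed via `Nat.nth`. -/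
theorem equalizing_not_optimal :
    letI head : List (Fin 2) := [0, 1, 0, 1, 1, 1, 1, 0, 0, 1, 0, 1, 0, 0, 0, 1]
    letI ξ : ℕ → Fin 2 := fun k =>
      if k < 16 then head.getD k 0 else if k % 2 = 0 then 1 else 0
    ∀ i : Fin 2,
      (∑' ℓ : ℕ, (1 / 2 : ℝ) ^ (ℓ + 1) * ((Nat.nth (fun k => ξ k = i) ℓ : ℝ) + 1))
        = 923 / 256 := by
  intro i
  show (∑' ℓ : ℕ, (1 / 2 : ℝ) ^ (ℓ + 1) * ((Nat.nth (fun k => EqAux.xi k = i) ℓ : ℝ) + 1))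
      = 923 / 256
  fin_cases i
  · exact EqAux.main0
  · exact EqAux.main1
end
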